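/- arXiv:1803.06876 — 2 statements merged into one kernel-verified Lean document; each statement's English description precedes it below -/
import Mathlib

section
/- Let P be a poset and 𝓜 a minimal subset selection on P. Then P is 𝓜-continuous if and only if the 𝓜-convergence structure in P is topological (i.e., every net converging to a point x in the topology τ_𝓜 also 𝓜-converges to x). -/
universe u

/-- A directed preordered index for a net: `r` is reflexive, transitive,
the index type is nonempty, and `r` is directed. -/
structure IsDirNet {I : Type u} (r : I → I → Prop) : Prop where
  refl : ∀ i, r i i
  trans : ∀ {i j k : I}, r i j → r j k → r i k
  nonempty : Nonempty I
  directed : ∀ i j, ∃ k, r i k ∧ r j k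

/-- A minimal subset selection on a poset `P`. -/
def MinSel {P : Type u} [PartialOrder P] (M : Set (Set P)) : Prop :=
  (∅ : Set P) ∉ M ∧ ∀ x : P, {x} ∈ M

/-- The net `f : I → P` (indexed by `(I, r)`) `𝓜`-converges to `x`. -/
def MConv {P : Type u} [PartialOrder P] (M : Set (Set P))
    {I : Type u} (r : I → I → Prop) (f : I → P) (x : P) : Prop :=
  ∃ A : Set P, ∃ s : P, A ∈ M ∧ IsLUB A s ∧ x ≤ s ∧
    ∀ a ∈ A, ∃ i₀, ∀ i, r i₀ i → a ≤ f i

/-- The topology `τ_𝓜` induced by `𝓜`-convergence, as a collection of open sets. -/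
def mTop {P : Type u} [PartialOrder P] (M : Set (Set P)) : Set (Set P) :=
  {U | ∀ (I : Type u) (r : I → I → Prop) (f : I → P) (x : P),
      IsDirNet r → MConv M r f x → x ∈ U → ∃ i₀, ∀ i, r i₀ i → f i ∈ U}

/-- The `𝓜`-convergence structure is topological: every net converging to `x` with
respect to `τ_𝓜` also `𝓜`-converges to `x`. -/
def MTopological {P : Type u} [PartialOrder P] (M : Set (Set P)) : Prop :=
  ∀ (I : Type u) (r : I → I → Prop) (f : I → P) (x : P), IsDirNet r →
    (∀ U ∈ mTop M, x ∈ U → ∃ i₀, ∀ i, r i₀ i → f i ∈ U) →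
    MConv M r f x

/-- The `𝓜`-way-below relation `x ≪_𝓜 y`. -/
def wayBelowM {P : Type u} [PartialOrder P] (M : Set (Set P)) (x y : P) : Prop :=
  ∀ (A : Set P) (s : P), A ∈ M → IsLUB A s → y ≤ s →
    ∃ B : Set P, B.Nonempty ∧ B.Finite ∧ B ⊆ A ∧ upperBounds B ⊆ Set.Ici x

/-- `𝓜`-continuity of the poset `P`. -/
def MCont {P : Type u} [PartialOrder P] (M : Set (Set P)) : Prop :=
  ∀ x : P,
    (∃ A : Set P, ∃ s : P, A ∈ M ∧ IsLUB A s ∧ A ⊆ {y | wayBelowM M y x} ∧ x ≤ s) ∧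
    {y | wayBelowM M x y} ∈ mTop M

/-!
For `(⇒)`, take `A` from (M1) for the limit `x`: each `a ∈ A` has `x` in the open set
`↟a = {y | a ≪_𝓜 y}`, so a `τ_𝓜`-convergent net is eventually in `↟a ⊆ ↑a`.

For `(⇐)`, a point `a` below an open neighbourhood `U` of `x` is `a ≪_𝓜 x`: otherwise some
`B ∈ 𝓜⁺` with `x ≤ sup B` has, for every finite `G ⊆ B`, an upper bound outside `↑a`, and these
bounds form a net `𝓜`-converging to `x` that never enters `U`. Applying the hypothesis to the
neighbourhood net of `x` then gives (M1). For (M2) one needs interpolation: if `x ≪_𝓜 y` and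
`y ≤ sup B`, some finite `G ⊆ B` has `ub G ⊆ ↟x`. Otherwise the same construction gives a net of
points `z ∉ ↟x` converging to `y`, each `z` is the limit of a net outside `↑x`, and the diagonal
net of this iterated limit converges to `y` in `τ_𝓜`, hence `𝓜`-converges to `y`; but then
`x ≪_𝓜 y` forces it eventually into `↑x`.
-/

open Set

namespace IsDirNet

variable {I : Type u} {r : I → I → Prop}

def atTop (hr : IsDirNet r) : Filter I where
  sets := {s | ∃ i₀, ∀ i, r i₀ i → i ∈ s}
  univ_sets := let ⟨i⟩ := hr.nonempty; ⟨i, fun _ _ => mem_univ _⟩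
  sets_of_superset := fun ⟨i₀, h⟩ hst => ⟨i₀, fun i hi => hst (h i hi)⟩
  inter_sets := by
    rintro s t ⟨i, hs⟩ ⟨j, ht⟩
    obtain ⟨k, hik, hjk⟩ := hr.directed i j
    exact ⟨k, fun l hkl => ⟨hs l (hr.trans hik hkl), ht l (hr.trans hjk hkl)⟩⟩

theorem eventually_forall_of_finite (hr : IsDirNet r) {α : Type*} {s : Set α} (hs : s.Finite)
    {p : α → I → Prop} (h : ∀ a ∈ s, ∃ i₀, ∀ i, r i₀ i → p a i) :
    ∃ i₀, ∀ i, r i₀ i → ∀ a ∈ s, p a i :=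
  (Filter.eventually_all_finite (l := hr.atTop) hs).2 h

theorem prod {J : Type u} {s : J → J → Prop} (hr : IsDirNet r) (hs : IsDirNet s) :
    IsDirNet fun p q : I × J => r p.1 q.1 ∧ s p.2 q.2 where
  refl p := ⟨hr.refl p.1, hs.refl p.2⟩
  trans h₁ h₂ := ⟨hr.trans h₁.1 h₂.1, hs.trans h₁.2 h₂.2⟩
  nonempty := let ⟨i⟩ := hr.nonempty; let ⟨j⟩ := hs.nonempty; ⟨(i, j)⟩
  directed p q :=
    let ⟨i, hi₁, hi₂⟩ := hr.directed p.1 q.1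
    let ⟨j, hj₁, hj₂⟩ := hs.directed p.2 q.2
    ⟨(i, j), ⟨hi₁, hj₁⟩, ⟨hi₂, hj₂⟩⟩

theorem pi {ι : Type u} {K : ι → Type u} {r : ∀ i, K i → K i → Prop}
    (h : ∀ i, IsDirNet (r i)) :
    IsDirNet fun φ ψ : (∀ i, K i) => ∀ i, r i (φ i) (ψ i) where
  refl φ i := (h i).refl (φ i)
  trans h₁ h₂ i := (h i).trans (h₁ i) (h₂ i)
  nonempty := ⟨fun i => (h i).nonempty.some⟩
  directed φ ψ := by
    choose χ hφ hψ using fun i => (h i).directed (φ i) (ψ i)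
    exact ⟨χ, hφ, hψ⟩

end IsDirNet

section

variable {P : Type u} [PartialOrder P] {M : Set (Set P)}

theorem wayBelowM.le {x y : P} (h : wayBelowM M x y) (hM : ∀ z : P, {z} ∈ M) : x ≤ y := by
  obtain ⟨B, -, -, hB, hBx⟩ := h {y} y (hM y) isLUB_singleton le_rfl
  exact hBx fun z hz => (hB hz).le

theorem univ_mem_mTop : (univ : Set P) ∈ mTop M :=
  fun _ _ _ _ hr _ _ => let ⟨i⟩ := hr.nonempty; ⟨i, fun _ _ => mem_univ _⟩

theorem inter_mem_mTop {U V : Set P} (hU : U ∈ mTop M) (hV : V ∈ mTop M) :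
    U ∩ V ∈ mTop M := by
  intro I r f x hr hfx hx
  obtain ⟨i, hi⟩ := hU I r f x hr hfx hx.1
  obtain ⟨j, hj⟩ := hV I r f x hr hfx hx.2
  obtain ⟨k, hik, hjk⟩ := hr.directed i j
  exact ⟨k, fun l hkl => ⟨hi l (hr.trans hik hkl), hj l (hr.trans hjk hkl)⟩⟩

theorem exists_net_of_forall_finite_ub {B : Set P} (hB : B.Nonempty) {Q : P → Prop}
    (H : ∀ G, G.Nonempty → G.Finite → G ⊆ B → ∃ w ∈ upperBounds G, Q w) :
    ∃ (I : Type u) (r : I → I → Prop) (f : I → P),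
      IsDirNet r ∧ (∀ i, Q (f i)) ∧ ∀ b ∈ B, ∃ i₀, ∀ i, r i₀ i → b ≤ f i := by
  let I := {G : Set P // G.Nonempty ∧ G.Finite ∧ G ⊆ B}
  let single (b : P) (hb : b ∈ B) : I :=
    ⟨{b}, singleton_nonempty b, finite_singleton b, singleton_subset_iff.2 hb⟩
  choose f hf hQ using fun G : I => H G.1 G.2.1 G.2.2.1 G.2.2.2
  refine ⟨I, fun G G' => G.1 ⊆ G'.1, f,
    ⟨fun _ => subset_rfl, fun h₁ h₂ => h₁.trans h₂, ?_, ?_⟩, hQ,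
    fun b hb => ⟨single b hb, fun G hG => hf G (hG rfl)⟩⟩
  · obtain ⟨b, hb⟩ := hB
    exact ⟨single b hb⟩
  · intro G G'
    exact ⟨⟨G.1 ∪ G'.1, G.2.1.mono subset_union_left, G.2.2.1.union G'.2.2.1,
      union_subset G.2.2.2 G'.2.2.2⟩, subset_union_left, subset_union_right⟩

theorem exists_mConv_net_forall_notMem (hM : (∅ : Set P) ∉ M) {B : Set P} {t y : P}
    (hB : B ∈ M) (hBt : IsLUB B t) (hyt : y ≤ t) {S : Set P}
    (h : ¬ ∃ G, G.Nonempty ∧ G.Finite ∧ G ⊆ B ∧ upperBounds G ⊆ S) :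
    ∃ (I : Type u) (r : I → I → Prop) (f : I → P),
      IsDirNet r ∧ (∀ i, f i ∉ S) ∧ MConv M r f y := by
  have hBne : B.Nonempty := nonempty_iff_ne_empty.2 fun hB' => hM (hB' ▸ hB)
  obtain ⟨I, r, f, hr, hS, hev⟩ := exists_net_of_forall_finite_ub hBne
    fun G h₁ h₂ h₃ => not_subset.1 fun hGS => h ⟨G, h₁, h₂, h₃, hGS⟩
  exact ⟨I, r, f, hr, hS, B, t, hB, hBt, hyt, hev⟩

theorem exists_mConv_net_not_ge_of_not_wayBelowM (hM : (∅ : Set P) ∉ M) {x y : P}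
    (h : ¬ wayBelowM M x y) :
    ∃ (I : Type u) (r : I → I → Prop) (f : I → P),
      IsDirNet r ∧ (∀ i, ¬ x ≤ f i) ∧ MConv M r f y := by
  simp only [wayBelowM, not_forall] at h
  obtain ⟨B, t, hB, hBt, hyt, h⟩ := h
  exact exists_mConv_net_forall_notMem hM hB hBt hyt h

theorem wayBelowM_of_subset_Ici (hM : (∅ : Set P) ∉ M) {U : Set P} (hU : U ∈ mTop M) {x a : P}
    (hx : x ∈ U) (ha : U ⊆ Ici a) : wayBelowM M a x := by
  by_contra h
  obtain ⟨I, r, f, hr, hf, hfx⟩ := exists_mConv_net_not_ge_of_not_wayBelowM hM h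
  obtain ⟨i₀, hi₀⟩ := hU I r f x hr hfx hx
  exact hf i₀ (ha (hi₀ i₀ (hr.refl i₀)))

/-- The diagonal net of an iterated limit converges in `τ_𝓜`. -/
theorem eventually_mem_diagonal {U : Set P} (hU : U ∈ mTop M) {J : Type u}
    {rJ : J → J → Prop} {g : J → P} {y : P} (hJ : IsDirNet rJ) (hg : MConv M rJ g y)
    (hy : y ∈ U) {K : J → Type u} {rK : ∀ j, K j → K j → Prop} {k : ∀ j, K j → P}
    (hK : ∀ j, IsDirNet (rK j)) (hk : ∀ j, MConv M (rK j) (k j) (g j)) :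
    ∃ l₀ : J × (∀ j, K j), ∀ l : J × (∀ j, K j),
      (rJ l₀.1 l.1 ∧ ∀ j, rK j (l₀.2 j) (l.2 j)) → k l.1 (l.2 l.1) ∈ U := by
  obtain ⟨j₀, hj₀⟩ := hU J rJ g y hJ hg hy
  have : ∀ j, ∃ i₀, rJ j₀ j → ∀ i, rK j i₀ i → k j i ∈ U := by
    intro j
    by_cases hj : rJ j₀ j
    · obtain ⟨i₀, hi₀⟩ := hU _ _ _ _ (hK j) (hk j) (hj₀ j hj)
      exact ⟨i₀, fun _ => hi₀⟩
    · exact ⟨(hK j).nonempty.some, fun h => absurd h hj⟩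
  choose φ hφ using this
  exact ⟨(j₀, φ), fun l hl => hφ l.1 hl.1 _ (hl.2 l.1)⟩

theorem MCont.mTopological (hM : ∀ x : P, {x} ∈ M) (h : MCont M) : MTopological M := by
  intro I r f x hr hfx
  obtain ⟨⟨A, s, hA, hAs, hAx, hxs⟩, -⟩ := h x
  refine ⟨A, s, hA, hAs, hxs, fun a ha => ?_⟩
  obtain ⟨i₀, hi₀⟩ := hfx _ (h a).2 (hAx ha)
  exact ⟨i₀, fun i hi => (hi₀ i hi).le hM⟩

namespace MTopological

theorem exists_wayBelowM_isLUB (top : MTopological M) (hM : (∅ : Set P) ∉ M) (x : P) :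
    ∃ A : Set P, ∃ s : P,
      A ∈ M ∧ IsLUB A s ∧ A ⊆ {y | wayBelowM M y x} ∧ x ≤ s := by
  let N := {p : Set P × P // p.1 ∈ mTop M ∧ x ∈ p.1 ∧ p.2 ∈ p.1}
  have hN : IsDirNet fun p q : N => q.1.1 ⊆ p.1.1 :=
    { refl := fun _ => subset_rfl
      trans := fun h₁ h₂ => h₂.trans h₁
      nonempty := ⟨⟨(univ, x), univ_mem_mTop, mem_univ x, mem_univ x⟩⟩
      directed := fun p q => ⟨⟨(p.1.1 ∩ q.1.1, x), inter_mem_mTop p.2.1 q.2.1,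
        ⟨p.2.2.1, q.2.2.1⟩, ⟨p.2.2.1, q.2.2.1⟩⟩,
        inter_subset_left, inter_subset_right⟩ }
  obtain ⟨A, s, hA, hAs, hxs, hev⟩ := top N _ (fun p => p.1.2) x hN
    fun U hU hxU => ⟨⟨(U, x), hU, hxU, hxU⟩, fun q hq => hq q.2.2.2⟩
  refine ⟨A, s, hA, hAs, fun a ha => ?_, hxs⟩
  obtain ⟨⟨⟨U, _⟩, hU, hxU, _⟩, hUa⟩ := hev a ha
  exact wayBelowM_of_subset_Ici hM hU hxU fun z hz => hUa ⟨(U, z), hU, hxU, hz⟩ subset_rfl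

theorem exists_finite_upperBounds_subset_wayBelowM (top : MTopological M)
    (hM : (∅ : Set P) ∉ M) {x y t : P} {B : Set P} (hxy : wayBelowM M x y) (hB : B ∈ M)
    (hBt : IsLUB B t) (hyt : y ≤ t) :
    ∃ G, G.Nonempty ∧ G.Finite ∧ G ⊆ B ∧ upperBounds G ⊆ {z | wayBelowM M x z} := by
  by_contra h
  obtain ⟨J, rJ, g, hJ, hg, hgy⟩ := exists_mConv_net_forall_notMem hM hB hBt hyt h
  choose K rK k hK hk hkg using fun j => exists_mConv_net_not_ge_of_not_wayBelowM hM (hg j)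
  have hL := hJ.prod (IsDirNet.pi hK)
  obtain ⟨C, c, hC, hCc, hyc, hev⟩ :=
    top _ _ (fun l : J × (∀ j, K j) => k l.1 (l.2 l.1)) y hL
      fun _ hU hy => eventually_mem_diagonal hU hJ hgy hy hK hkg
  obtain ⟨F, -, hF, hFC, hFx⟩ := hxy C c hC hCc hyc
  obtain ⟨l, hl⟩ := hL.eventually_forall_of_finite hF fun a ha => hev a (hFC ha)
  exact hk l.1 (l.2 l.1) (hFx fun a ha => hl l (hL.refl l) a ha)

theorem setOf_wayBelowM_mem_mTop (top : MTopological M) (hM : (∅ : Set P) ∉ M) (x : P) :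
    {y | wayBelowM M x y} ∈ mTop M := by
  rintro I r f y hr ⟨B, t, hB, hBt, hyt, hev⟩ hy
  obtain ⟨G, -, hG, hGB, hGx⟩ :=
    top.exists_finite_upperBounds_subset_wayBelowM hM hy hB hBt hyt
  obtain ⟨i₀, hi₀⟩ := hr.eventually_forall_of_finite hG fun a ha => hev a (hGB ha)
  exact ⟨i₀, fun i hi => hGx (hi₀ i hi)⟩

theorem mCont (top : MTopological M) (hM : (∅ : Set P) ∉ M) : MCont M :=
  fun x => ⟨top.exists_wayBelowM_isLUB hM x, top.setOf_wayBelowM_mem_mTop hM x⟩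

end MTopological

end

/-- `P` is 𝓜-continuous iff the 𝓜-convergence structure in `P` is topological. -/
theorem stmt_5 {P : Type u} [PartialOrder P] (M : Set (Set P)) (hM : MinSel M) :
    MCont M ↔ MTopological M :=
  ⟨MCont.mTopological hM.2, fun top => top.mCont hM.1⟩
end

section
/- Let P be a poset, 𝓜, 𝓝 minimal subset selections on P, and y, z ∈ P. Then y ◁_𝓜𝓝 z if and only if for every net (x_i)_{i∈I} in P, if (x_i) 𝓜𝓝-converges to y then x_i ∈ ↓z eventually. -/
universe u

/-- The net `f : I → P` `𝓜𝓝`-converges to `x`. -/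
def MNConv {P : Type u} [PartialOrder P] (M N : Set (Set P))
    {I : Type u} (r : I → I → Prop) (f : I → P) (x : P) : Prop :=
  ∃ A S : Set P, A ∈ M ∧ S ∈ N ∧ IsLUB A x ∧ IsGLB S x ∧
    ∀ a ∈ A, ∀ s ∈ S, ∃ i₀, ∀ i, r i₀ i → a ≤ f i ∧ f i ≤ s

/-- The topology `τ_𝓜𝓝` induced by `𝓜𝓝`-convergence. -/
def mnTop {P : Type u} [PartialOrder P] (M N : Set (Set P)) : Set (Set P) :=
  {U | ∀ (I : Type u) (r : I → I → Prop) (f : I → P) (x : P),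
      IsDirNet r → MNConv M N r f x → x ∈ U → ∃ i₀, ∀ i, r i₀ i → f i ∈ U}

/-- The `𝓜𝓝`-convergence structure is topological. -/
def MNTopological {P : Type u} [PartialOrder P] (M N : Set (Set P)) : Prop :=
  ∀ (I : Type u) (r : I → I → Prop) (f : I → P) (x : P), IsDirNet r →
    (∀ U ∈ mnTop M N, x ∈ U → ∃ i₀, ∀ i, r i₀ i → f i ∈ U) →
    MNConv M N r f x

/-- The relation `x ≪_𝓜𝓝 y`. -/
def wbMN {P : Type u} [PartialOrder P] (M N : Set (Set P)) (x y : P) : Prop :=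
  ∀ A S : Set P, A ∈ M → S ∈ N → IsLUB A y → IsGLB S y →
    ∃ B T : Set P, B.Nonempty ∧ B.Finite ∧ B ⊆ A ∧ T.Nonempty ∧ T.Finite ∧ T ⊆ S ∧
      upperBounds B ∩ lowerBounds T ⊆ Set.Ici x

/-- The relation `y ◁_𝓜𝓝 z`. -/
def triMN {P : Type u} [PartialOrder P] (M N : Set (Set P)) (y z : P) : Prop :=
  ∀ A S : Set P, A ∈ M → S ∈ N → IsLUB A y → IsGLB S y →
    ∃ B T : Set P, B.Nonempty ∧ B.Finite ∧ B ⊆ A ∧ T.Nonempty ∧ T.Finite ∧ T ⊆ S ∧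
      upperBounds B ∩ lowerBounds T ⊆ Set.Iic z

/-- `𝓜𝓝`-continuity of the poset `P`. -/
def MNCont {P : Type u} [PartialOrder P] (M N : Set (Set P)) : Prop :=
  ∀ x y : P,
    (∃ A S : Set P, A ∈ M ∧ S ∈ N ∧ A ⊆ {w | wbMN M N w x} ∧
      S ⊆ {w | triMN M N x w} ∧ IsLUB A x ∧ IsGLB S x) ∧
    ({w | wbMN M N x w} ∩ {w | triMN M N w y}) ∈ mnTop M N


/-!
The forward direction: if `(x_i)` converges to `y` via `A` and `S`, the finite sets `B ⊆ A` and
`T ⊆ S` given by `y ◁ z` are eventually bounded by `x_i` from below and above, so eventually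
`x_i ∈ ub B ∩ lb T ⊆ ↓z`. Conversely, if `y ◁ z` fails for some `A` and `S`, pick for every pair of
nonempty finite `B ⊆ A`, `T ⊆ S` a point of `ub B ∩ lb T` outside `↓z`; indexed by such pairs
under inclusion, this is a net converging to `y` that is never in `↓z`.
-/

open Filter

section Nets

variable {I : Type u} {r : I → I → Prop}

def IsDirNet.tail (hr : IsDirNet r) : Filter I where
  sets := {U | ∃ i₀, ∀ i, r i₀ i → i ∈ U}
  univ_sets := let ⟨i⟩ := hr.nonempty; ⟨i, fun _ _ => trivial⟩
  sets_of_superset := fun ⟨i₀, h₀⟩ hUV => ⟨i₀, fun i hi => hUV (h₀ i hi)⟩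
  inter_sets := fun ⟨i₁, h₁⟩ ⟨i₂, h₂⟩ =>
    let ⟨k, hk₁, hk₂⟩ := hr.directed i₁ i₂
    ⟨k, fun i hi => ⟨h₁ i (hr.trans hk₁ hi), h₂ i (hr.trans hk₂ hi)⟩⟩

variable {P : Type u} [PartialOrder P]

theorem IsDirNet.eventually_mem_upperBounds_inter_lowerBounds (hr : IsDirNet r) {f : I → P}
    {A S B T : Set P} (hev : ∀ a ∈ A, ∀ s ∈ S, ∀ᶠ i in hr.tail, a ≤ f i ∧ f i ≤ s)
    (hBne : B.Nonempty) (hBfin : B.Finite) (hBA : B ⊆ A)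
    (hTne : T.Nonempty) (hTfin : T.Finite) (hTS : T ⊆ S) :
    ∀ᶠ i in hr.tail, f i ∈ upperBounds B ∩ lowerBounds T := by
  obtain ⟨a₀, ha₀⟩ := hBne
  obtain ⟨s₀, hs₀⟩ := hTne
  have hub : ∀ᶠ i in hr.tail, ∀ a ∈ B, a ≤ f i :=
    (hBfin.eventually_all).2 fun a ha => (hev a (hBA ha) s₀ (hTS hs₀)).mono fun _ => And.left
  have hlb : ∀ᶠ i in hr.tail, ∀ s ∈ T, f i ≤ s :=
    (hTfin.eventually_all).2 fun s hs => (hev a₀ (hBA ha₀) s (hTS hs)).mono fun _ => And.right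
  exact hub.and hlb

end Nets

section FinSubPair

variable {P : Type u} {A S : Set P}

abbrev FinSubPair (A S : Set P) : Type u :=
  {p : Finset P × Finset P // (p.1.Nonempty ∧ ↑p.1 ⊆ A) ∧ (p.2.Nonempty ∧ ↑p.2 ⊆ S)}

def FinSubPair.single {a s : P} (ha : a ∈ A) (hs : s ∈ S) : FinSubPair A S :=
  ⟨({a}, {s}), ⟨Finset.singleton_nonempty a, by simpa using ha⟩,
    ⟨Finset.singleton_nonempty s, by simpa using hs⟩⟩

theorem FinSubPair.isDirNet (hA : A.Nonempty) (hS : S.Nonempty) :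
    IsDirNet ((· ≤ ·) : FinSubPair A S → FinSubPair A S → Prop) where
  refl := le_refl
  trans := le_trans
  nonempty := ⟨single hA.some_mem hS.some_mem⟩
  directed := by
    classical
    rintro ⟨⟨B, T⟩, ⟨hB, hBA⟩, hT, hTS⟩ ⟨⟨B', T'⟩, ⟨-, hBA'⟩, -, hTS'⟩
    exact ⟨⟨(B ∪ B', T ∪ T'), ⟨hB.mono Finset.subset_union_left, by simpa using ⟨hBA, hBA'⟩⟩,
      ⟨hT.mono Finset.subset_union_left, by simpa using ⟨hTS, hTS'⟩⟩⟩,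
      ⟨Finset.subset_union_left, Finset.subset_union_left⟩,
      ⟨Finset.subset_union_right, Finset.subset_union_right⟩⟩

theorem mnConv_of_mem_upperBounds_inter_lowerBounds [PartialOrder P] {M N : Set (Set P)} {y : P}
    (hAM : A ∈ M) (hSN : S ∈ N) (hlub : IsLUB A y) (hglb : IsGLB S y) (f : FinSubPair A S → P)
    (hf : ∀ p, f p ∈ upperBounds (p.1.1 : Set P) ∩ lowerBounds (p.1.2 : Set P)) :
    MNConv M N (· ≤ ·) f y :=
  ⟨A, S, hAM, hSN, hlub, hglb, fun a ha s hs => ⟨FinSubPair.single ha hs, fun p hp =>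
    ⟨(hf p).1 (hp.1 (Finset.mem_singleton_self a)),
      (hf p).2 (hp.2 (Finset.mem_singleton_self s))⟩⟩⟩

theorem exists_finSubPair_not_le_of_not_triMN [PartialOrder P] {M N : Set (Set P)} {y z : P}
    (h : ¬triMN M N y z) :
    ∃ A S, A ∈ M ∧ S ∈ N ∧ IsLUB A y ∧ IsGLB S y ∧ ∀ p : FinSubPair A S,
      ∃ x ∈ upperBounds (p.1.1 : Set P) ∩ lowerBounds (p.1.2 : Set P), ¬x ≤ z := by
  simp only [triMN, not_exists, not_and, not_forall, Set.not_subset] at h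
  obtain ⟨A, S, hAM, hSN, hlub, hglb, hbad⟩ := h
  refine ⟨A, S, hAM, hSN, hlub, hglb, fun ⟨⟨B, T⟩, ⟨hB, hBA⟩, hT, hTS⟩ => ?_⟩
  simpa using hbad B T (by simpa using hB) B.finite_toSet hBA (by simpa using hT)
    T.finite_toSet hTS

end FinSubPair

theorem MinSel.nonempty_of_mem {P : Type u} [PartialOrder P] {M : Set (Set P)} (hM : MinSel M)
    {A : Set P} (hA : A ∈ M) : A.Nonempty :=
  Set.nonempty_iff_ne_empty.2 fun h => hM.1 (h ▸ hA)

/-- Net characterisation of `y ◁_𝓜𝓝 z`. -/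
theorem stmt_12 {P : Type u} [PartialOrder P] (M N : Set (Set P))
    (hM : MinSel M) (hN : MinSel N) (y z : P) :
    triMN M N y z ↔
      ∀ (I : Type u) (r : I → I → Prop) (f : I → P), IsDirNet r →
        MNConv M N r f y → ∃ i₀, ∀ i, r i₀ i → f i ≤ z := by
  constructor
  · rintro htri I r f hr ⟨A, S, hAM, hSN, hlub, hglb, hev⟩
    obtain ⟨B, T, hBne, hBfin, hBA, hTne, hTfin, hTS, hsub⟩ := htri A S hAM hSN hlub hglb
    exact (hr.eventually_mem_upperBounds_inter_lowerBounds hev hBne hBfin hBA hTne hTfin hTS).mono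
      fun _ hi => hsub hi
  · intro hnet
    by_contra htri
    obtain ⟨A, S, hAM, hSN, hlub, hglb, hbad⟩ := exists_finSubPair_not_le_of_not_triMN htri
    choose f hf hfz using hbad
    obtain ⟨i₀, h₀⟩ := hnet _ _ f
      (FinSubPair.isDirNet (hM.nonempty_of_mem hAM) (hN.nonempty_of_mem hSN))
      (mnConv_of_mem_upperBounds_inter_lowerBounds hAM hSN hlub hglb f hf)
    exact hfz i₀ (h₀ i₀ le_rfl)
end
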